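/- arXiv:2506.11500 — 4 statements merged into one kernel-verified Lean document; each statement's English description precedes it below -/
import Mathlib

section
/- For every abelian group G and every n ∈ ℕ, the topologies Z±_n(G) and Z_n(G) coincide; consequently the group Zariski topology Z±(G) coincides with the semigroup Zariski topology Z(G). -/
open Topology TopologicalSpace

/-- Evaluation of the semigroup polynomial `a₀ x a₁ x ⋯ x aₙ`, encoded by its first
coefficient `a` and the list `l = [a₁, …, aₙ]` of remaining coefficients
(so the degree is `l.length`). -/
def sgEval {M : Type*} [Monoid M] (x a : M) (l : List M) : M :=
  a * (l.map (fun b => x * b)).prod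

/-- The semigroup Zariski topology `Z(M)`, generated by the sets
`{x | f x ≠ g x}` with `f, g` semigroup polynomials. -/
def sgZariski (M : Type*) [Monoid M] : TopologicalSpace M :=
  generateFrom {U | ∃ (a : M) (l : List M) (b : M) (m : List M),
    U = {x | sgEval x a l ≠ sgEval x b m}}

/-- The bounded semigroup Zariski topology `Z_n(M)`, generated by the sets
`{x | f x ≠ g x}` with `f, g` semigroup polynomials of degree at most `n`. -/
def sgZariskiLe (M : Type*) [Monoid M] (n : ℕ) : TopologicalSpace M :=
  generateFrom {U | ∃ (a : M) (l : List M) (b : M) (m : List M),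
    l.length ≤ n ∧ m.length ≤ n ∧ U = {x | sgEval x a l ≠ sgEval x b m}}

/-- Evaluation of the group polynomial `a₀ x^{ε₁} a₁ ⋯ x^{εₙ} aₙ`, encoded by its first
coefficient `a` and the list `l = [(ε₁,a₁), …, (εₙ,aₙ)]`, where `true` stands for the
exponent `1` and `false` for the exponent `-1` (so the degree is `l.length`). -/
def gpEval {G : Type*} [Group G] (x a : G) (l : List (Bool × G)) : G :=
  a * (l.map (fun p => (if p.1 then x else x⁻¹) * p.2)).prod

/-- The group Zariski topology `Z±(G)`, generated by the sets `{x | f x ≠ 1}`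
with `f` a group polynomial. -/
def gpZariski (G : Type*) [Group G] : TopologicalSpace G :=
  generateFrom {U | ∃ (a : G) (l : List (Bool × G)), U = {x | gpEval x a l ≠ 1}}

/-- The bounded group Zariski topology `Z±_n(G)`, generated by the sets `{x | f x ≠ 1}`
with `f` a group polynomial of degree at most `n`. -/
def gpZariskiLe (G : Type*) [Group G] (n : ℕ) : TopologicalSpace G :=
  generateFrom {U | ∃ (a : G) (l : List (Bool × G)), l.length ≤ n ∧ U = {x | gpEval x a l ≠ 1}}


/-!
In an abelian group every polynomial collapses to a normal form: `sgEval x a l = c * x ^ k` and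
`gpEval x a l = c * x ^ p / x ^ q` with `k = l.length` and `p + q = l.length`. Hence
`{x | c * x ^ k ≠ d * x ^ j}` with `j ≤ k` is `{x | d⁻¹ * c * x ^ (k - j) ≠ 1}`, and
`{x | c * x ^ p / x ^ q ≠ 1}` is `{x | c * x ^ p ≠ x ^ q}`, without raising the degree.
So the two families of generating sets coincide degree by degree.
-/

lemma sgEval_eq_mul_pow {M : Type*} [CommMonoid M] (x a : M) (l : List M) :
    sgEval x a l = a * l.prod * x ^ l.length := by
  unfold sgEval
  induction l generalizing a with
  | nil => simp
  | cons b l ih =>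
    simp only [List.map_cons, List.prod_cons, List.length_cons]
    rw [← mul_assoc, ih, pow_succ]
    ac_rfl

section CommGroup

variable {G : Type*} [CommGroup G]

lemma gpEval_eq_mul_pow_div_pow (x a : G) (l : List (Bool × G)) :
    gpEval x a l =
      a * (l.map Prod.snd).prod * x ^ l.countP (·.1) / x ^ l.countP (fun p => !p.1) := by
  unfold gpEval
  induction l generalizing a with
  | nil => simp
  | cons b l ih =>
    simp only [List.map_cons, List.prod_cons, List.countP_cons]
    rw [← mul_assoc, ih]
    cases b.1 <;> simp [pow_succ, div_eq_mul_inv, mul_assoc, mul_comm, mul_left_comm]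

lemma gpEval_replicate_true_one (x c : G) (k : ℕ) :
    gpEval x c (List.replicate k (true, 1)) = c * x ^ k := by
  simp [gpEval_eq_mul_pow_div_pow, List.countP_replicate]

lemma mul_pow_eq_mul_pow_iff {c d x : G} {j k : ℕ} (h : j ≤ k) :
    c * x ^ k = d * x ^ j ↔ d⁻¹ * c * x ^ (k - j) = 1 := by
  rw [← pow_sub_mul_pow x h, ← mul_assoc, mul_left_inj, mul_assoc, inv_mul_eq_one, eq_comm]

lemma exists_gpEval_setOf_eq_of_length_le (a b : G) {l m : List G}
    (h : m.length ≤ l.length) :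
    ∃ (c : G) (l' : List (Bool × G)), l'.length ≤ l.length ∧
      {x | sgEval x a l ≠ sgEval x b m} = {x | gpEval x c l' ≠ 1} := by
  refine ⟨(b * m.prod)⁻¹ * (a * l.prod), List.replicate (l.length - m.length) (true, 1),
    by simp, ?_⟩
  ext x
  simp only [Set.mem_ofPred_eq, sgEval_eq_mul_pow, gpEval_replicate_true_one]
  exact (mul_pow_eq_mul_pow_iff h).not

lemma exists_gpEval_setOf_eq_sgEval (a b : G) (l m : List G) :
    ∃ (c : G) (l' : List (Bool × G)), l'.length ≤ max l.length m.length ∧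
      {x | sgEval x a l ≠ sgEval x b m} = {x | gpEval x c l' ≠ 1} := by
  rcases le_total m.length l.length with h | h
  · obtain ⟨c, l', hl', heq⟩ := exists_gpEval_setOf_eq_of_length_le a b h
    exact ⟨c, l', hl'.trans (le_max_left _ _), heq⟩
  · obtain ⟨c, l', hl', heq⟩ := exists_gpEval_setOf_eq_of_length_le b a h
    refine ⟨c, l', hl'.trans (le_max_right _ _), ?_⟩
    simpa only [ne_comm] using heq

lemma exists_sgEval_setOf_eq_gpEval (a : G) (l : List (Bool × G)) :
    ∃ (c : G) (l' : List G) (d : G) (m : List G),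
      l'.length ≤ l.length ∧ m.length ≤ l.length ∧
      {x | gpEval x a l ≠ 1} = {x | sgEval x c l' ≠ sgEval x d m} := by
  refine ⟨a * (l.map Prod.snd).prod, List.replicate (l.countP (·.1)) 1,
    1, List.replicate (l.countP (fun p => !p.1)) 1,
    by simpa using List.countP_le_length, by simpa using List.countP_le_length, ?_⟩
  ext x
  simp [gpEval_eq_mul_pow_div_pow, sgEval_eq_mul_pow, div_eq_one]

end CommGroup

/-- For every abelian group `G` and every `n`, the bounded group Zariski topology `Z±_n(G)`
coincides with the bounded semigroup Zariski topology `Z_n(G)`; consequently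
`Z±(G) = Z(G)`. -/
theorem statement1 (G : Type*) [CommGroup G] :
    (∀ n : ℕ, gpZariskiLe G n = sgZariskiLe G n) ∧ gpZariski G = sgZariski G := by
  refine ⟨fun n => congrArg generateFrom ?_, congrArg generateFrom ?_⟩ <;> ext U
  · constructor
    · rintro ⟨a, l, hl, rfl⟩
      obtain ⟨c, l', d, m, hl', hm, heq⟩ := exists_sgEval_setOf_eq_gpEval a l
      exact ⟨c, l', d, m, hl'.trans hl, hm.trans hl, heq⟩
    · rintro ⟨a, l, b, m, hl, hm, rfl⟩
      obtain ⟨c, l', hl', heq⟩ := exists_gpEval_setOf_eq_sgEval a b l m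
      exact ⟨c, l', hl'.trans (max_le hl hm), heq⟩
  · constructor
    · rintro ⟨a, l, rfl⟩
      obtain ⟨c, l', d, m, -, -, heq⟩ := exists_sgEval_setOf_eq_gpEval a l
      exact ⟨c, l', d, m, heq⟩
    · rintro ⟨a, l, b, m, rfl⟩
      obtain ⟨c, l', -, heq⟩ := exists_gpEval_setOf_eq_sgEval a b l m
      exact ⟨c, l', heq⟩
end

section
/- Let X be an infinite set and let G be a subgroup of Sym(X) with Sym_ω(X) ⊆ G. Then the following dichotomy holds: (i) if n ≥ 4, then Z±_n(G) is the topology of pointwise convergence on G, and in particular is totally disconnected; (ii) if n ≤ 3, then Z±_n(G) is hyperconnected. -/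
open Topology TopologicalSpace

/-- The topology of pointwise convergence on `Sym(X) = Equiv.Perm X`: the subspace topology
induced from the product space `X → X`, where `X` carries the discrete topology. -/
def permPtwise (X : Type*) : TopologicalSpace (Equiv.Perm X) :=
  TopologicalSpace.induced (fun (g : Equiv.Perm X) (x : X) => g x)
    (@Pi.topologicalSpace X (fun _ => X) (fun _ => ⊥))

/-- The topology of pointwise convergence on a subgroup `G ≤ Sym(X)`. -/
def subPtwise {X : Type*} (G : Subgroup (Equiv.Perm X)) : TopologicalSpace ↥G :=
  TopologicalSpace.induced Subtype.val (permPtwise X)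

/-- A topology is hyperconnected if any two nonempty open sets have nonempty intersection. -/
def Hyperconnected {Y : Type*} (t : TopologicalSpace Y) : Prop :=
  ∀ U V : Set Y, IsOpen[t] U → IsOpen[t] V → U.Nonempty → V.Nonempty → (U ∩ V).Nonempty

/-!
For `n ≥ 4`, the pointwise topology is a Hausdorff group topology, hence finer than `Z±_n`;
conversely the polynomials `(x · swap p z · x⁻¹ · swap q y)²` make the basic sets
`{g | g p = q}` open in `Z±_4`.

For `n ≤ 3`, hyperconnectedness means that finitely many group polynomials of degree at most
three, none identically `1`, have a common non-root; we find one among the finitary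
permutations. Up to cyclic rotation and inversion, which preserve the set of roots, such a
polynomial is `a x b₁ x ⋯ x d`, `a x b x⁻¹ c` or `a x b x c x⁻¹ d`. A common non-root is built
by forcing: finitely many values of `x` are committed, each one at a fresh point and chosen
among cofinitely many candidates, so that tracing a suitable point through the polynomial
visibly fails to return. The only obstruction is the conjugacy condition `x b x⁻¹ = (c a)⁻¹`
with `b` and `c a` finitary, which is avoided by keeping all committed values outside the
finite set of supports of such `c a`.
-/

section GroupPolynomial

variable {G H : Type*} [Group G] [Group H]

@[simp]
lemma gpEval_nil (x a : G) : gpEval x a [] = a := by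
  simp [gpEval]

@[simp]
lemma gpEval_cons (x a b : G) (e : Bool) (l : List (Bool × G)) :
    gpEval x a ((e, b) :: l) = a * ((if e then x else x⁻¹) * gpEval x b l) := by
  simp [gpEval, mul_assoc]

lemma map_gpEval (φ : G →* H) (x a : G) (l : List (Bool × G)) :
    φ (gpEval x a l) = gpEval (φ x) (φ a) (l.map (Prod.map id φ)) := by
  induction l generalizing a with
  | nil => simp
  | cons p l ih => cases p with | mk e b => cases e <;> simp [ih]

lemma gpEval_eq_one_iff_of_injective {φ : G →* H} (hφ : Function.Injective φ) (x a : G)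
    (l : List (Bool × G)) : gpEval (φ x) (φ a) (l.map (Prod.map id φ)) = 1 ↔ gpEval x a l = 1 := by
  rw [← map_gpEval, map_eq_one_iff φ hφ]

lemma gpEval_conj_sq (x σ τ : G) :
    gpEval x 1 [(true, σ), (false, τ), (true, σ), (false, τ)] = (x * σ * x⁻¹ * τ) ^ 2 := by
  simp [sq, mul_assoc]

lemma continuous_gpEval [TopologicalSpace G] [IsTopologicalGroup G] (a : G)
    (l : List (Bool × G)) : Continuous fun x => gpEval x a l := by
  induction l generalizing a with
  | nil => simpa using continuous_const
  | cons p l ih =>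
    obtain ⟨e, b⟩ := p
    simp only [gpEval_cons]
    refine continuous_const.mul (Continuous.mul ?_ (ih b))
    cases e
    · exact continuous_inv
    · exact continuous_id

lemma le_gpZariskiLe [t : TopologicalSpace G] [IsTopologicalGroup G] [T1Space G] (n : ℕ) :
    t ≤ gpZariskiLe G n :=
  le_generateFrom fun _ ⟨a, l, _, hU⟩ =>
    hU ▸ isOpen_compl_singleton.preimage (continuous_gpEval a l)

lemma eq_one_iff_of_conj (k : G) {u v : G} (h : k * u * k⁻¹ = v) : v = 1 ↔ u = 1 := by
  subst h
  simp

end GroupPolynomial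

def posChain {G : Type*} [Group G] (x : G) : List G → G
  | [] => x
  | b :: l => x * b * posChain x l

/-- Representatives, up to cyclic rotation and inversion, of the group polynomials of degree at
most three. -/
inductive NormalPoly (G : Type*)
  | const (a : G)
  | pos (a : G) (l : List G) (d : G)
  | conj (a b c : G)
  | posPosNeg (a b c d : G)

namespace NormalPoly

variable {G : Type*} [Group G]

def eval : NormalPoly G → G → G
  | const a, _ => a
  | pos a l d, x => a * posChain x l * d
  | conj a b c, x => a * x * b * x⁻¹ * c
  | posPosNeg a b c d, x => a * x * b * x * c * x⁻¹ * d

/-- Each normal form is conjugate to the polynomial or to its inverse, by the product `k` of the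
factors rotated from the back to the front. -/
lemma exists_eval_eq_one_iff (a : G) (l : List (Bool × G)) (hl : l.length ≤ 3) :
    ∃ N : NormalPoly G, ∀ x, N.eval x = 1 ↔ gpEval x a l = 1 := by
  match l, hl with
  | [], _ => exact ⟨const a, fun x => by simp [eval]⟩
  | [(e₁, b)], _ =>
    cases e₁
    · exact ⟨pos b⁻¹ [] a⁻¹, fun x =>
        (eq_one_iff_of_conj 1 (by simp [eval, posChain, mul_assoc])).trans inv_eq_one⟩
    · exact ⟨pos a [] b, fun x => by simp [eval, posChain, mul_assoc]⟩
  | [(e₁, b), (e₂, c)], _ =>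
    cases e₁ <;> cases e₂
    · exact ⟨pos c⁻¹ [b⁻¹] a⁻¹, fun x =>
        (eq_one_iff_of_conj 1 (by simp [eval, posChain, mul_assoc])).trans inv_eq_one⟩
    · exact ⟨conj 1 (c * a) b, fun x => eq_one_iff_of_conj (x * c) (by simp [eval]; group)⟩
    · exact ⟨conj a b c, fun x => by simp [eval, mul_assoc]⟩
    · exact ⟨pos a [b] c, fun x => by simp [eval, posChain, mul_assoc]⟩
  | [(e₁, b), (e₂, c), (e₃, d)], _ =>
    cases e₁ <;> cases e₂ <;> cases e₃
    · exact ⟨pos d⁻¹ [c⁻¹, b⁻¹] a⁻¹, fun x =>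
        (eq_one_iff_of_conj 1 (by simp [eval, posChain, mul_assoc])).trans inv_eq_one⟩
    · exact ⟨posPosNeg 1 b⁻¹ (a⁻¹ * d⁻¹) c⁻¹, fun x =>
        (eq_one_iff_of_conj (x * b⁻¹ * x * a⁻¹) (by simp [eval]; group)).trans inv_eq_one⟩
    · exact ⟨posPosNeg 1 (a⁻¹ * d⁻¹) c⁻¹ b⁻¹, fun x =>
        (eq_one_iff_of_conj (x * a⁻¹) (by simp [eval]; group)).trans inv_eq_one⟩
    · exact ⟨posPosNeg 1 c (d * a) b, fun x =>
        eq_one_iff_of_conj (x * c * x * d) (by simp [eval]; group)⟩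
    · exact ⟨posPosNeg d⁻¹ c⁻¹ b⁻¹ a⁻¹, fun x =>
        (eq_one_iff_of_conj 1 (by simp [eval, mul_assoc])).trans inv_eq_one⟩
    · exact ⟨posPosNeg 1 (d * a) b c, fun x => eq_one_iff_of_conj (x * d) (by simp [eval]; group)⟩
    · exact ⟨posPosNeg a b c d, fun x => by simp [eval, mul_assoc]⟩
    · exact ⟨pos a [b, c] d, fun x => by simp [eval, posChain, mul_assoc]⟩

end NormalPoly

namespace Equiv.Perm

variable {X : Type*} {a b c d x y : Perm X}

lemma mul_mul_apply_eq_of_eq_one (h : a * y * d = 1) (r : X) : d (a (y r)) = r := by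
  simpa using DFunLike.congr_fun (mul_eq_one_comm.1 h) r

lemma conj_apply_eq_of_eq_one (h : a * x * b * x⁻¹ * c = 1) (r : X) :
    c (a (x (b (x⁻¹ r)))) = r := by
  simpa using DFunLike.congr_fun (mul_eq_one_comm.1 h) r

lemma posPosNeg_apply_eq_of_eq_one (h : a * x * b * x * c * x⁻¹ * d = 1) (r : X) :
    d (a (x (b (x (c (x⁻¹ r)))))) = r := by
  simpa using DFunLike.congr_fun (mul_eq_one_comm.1 h) r

lemma finite_compl_fixedBy_mul (ha : (MulAction.fixedBy X a)ᶜ.Finite)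
    (hb : (MulAction.fixedBy X b)ᶜ.Finite) : (MulAction.fixedBy X (a * b))ᶜ.Finite :=
  (ha.union hb).subset <| by
    rw [← Set.compl_inter]
    exact Set.compl_subset_compl.2 (MulAction.fixedBy_mul X a b)

end Equiv.Perm

open MulAction Equiv Set

/-- A forcing condition: a finitary permutation whose values on the finite set `dom` are
committed, the committed values lying outside `B`. -/
structure Condition {X : Type*} (B : Set X) where
  perm : Perm X
  dom : Set X
  finite_compl_fixedBy : (fixedBy X perm)ᶜ.Finite
  finite_dom : dom.Finite
  mapsTo : MapsTo perm dom Bᶜ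

namespace Condition

variable {X : Type*} {B : Set X}

instance : Preorder (Condition B) where
  le C D := C.dom ⊆ D.dom ∧ EqOn D.perm C.perm C.dom
  le_refl C := ⟨subset_rfl, eqOn_refl _ _⟩
  le_trans C D E hCD hDE := ⟨hCD.1.trans hDE.1, fun _ hz => (hDE.2 (hCD.1 hz)).trans (hCD.2 hz)⟩

def Forces (C : Condition B) (P : Perm X → Prop) : Prop :=
  ∀ x : Perm X, EqOn x C.perm C.dom → P x

variable {C D : Condition B} {x : Perm X} {p : X}

lemma apply_eq_of_le (hx : EqOn x D.perm D.dom) (hCD : C ≤ D) (hp : p ∈ C.dom) :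
    x p = C.perm p :=
  (hx (hCD.1 hp)).trans (hCD.2 hp)

lemma Forces.mono {P : Perm X → Prop} (h : C.Forces P) (hCD : C ≤ D) : D.Forces P :=
  fun x hx => h x fun _ hz => apply_eq_of_le hx hCD hz

lemma exists_le_forall_forces {ι : Type*} (s : Finset ι) {P : ι → Perm X → Prop}
    (h : ∀ i ∈ s, ∀ C : Condition B, ∃ D, C ≤ D ∧ D.Forces (P i)) (C : Condition B) :
    ∃ D, C ≤ D ∧ ∀ i ∈ s, D.Forces (P i) := by
  classical
  induction s using Finset.induction_on generalizing C with
  | empty => exact ⟨C, le_rfl, by simp⟩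
  | insert i s _ ih =>
    obtain ⟨D, hCD, hD⟩ := h i (Finset.mem_insert_self i s) C
    obtain ⟨E, hDE, hE⟩ := ih (fun j hj => h j (Finset.mem_insert_of_mem hj)) D
    refine ⟨E, hCD.trans hDE, fun j hj => ?_⟩
    rcases Finset.mem_insert.1 hj with rfl | hj
    · exact hD.mono hDE
    · exact hE j hj

lemma exists_le_insert (hB : B.Finite) (C : Condition B) (hp : p ∉ C.dom) {T : Set X}
    (hT : T.Infinite) : ∃ D, C ≤ D ∧ D.dom = insert p C.dom ∧ D.perm p ∈ T := by
  classical
  obtain ⟨r, hrT, hr⟩ := (hT.sdiff ((C.finite_dom.image C.perm).union hB)).nonempty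
  simp only [mem_union, mem_image, not_or, not_exists, not_and] at hr
  have hagree : EqOn (swap r (C.perm p) * C.perm) C.perm C.dom := fun z hz =>
    swap_apply_of_ne_of_ne (fun h => hr.1 z hz h)
      (fun h => hp (C.perm.injective h ▸ hz : p ∈ C.dom))
  refine ⟨⟨swap r (C.perm p) * C.perm, insert p C.dom,
    Perm.finite_compl_fixedBy_mul finite_compl_fixedBy_swap C.finite_compl_fixedBy,
    C.finite_dom.insert p, ?_⟩, ⟨subset_insert _ _, hagree⟩, rfl, by simpa using hrT⟩
  rintro z (rfl | hz)
  · simpa using hr.2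
  · rw [hagree hz]
    exact C.mapsTo hz

variable [Infinite X]

lemma exists_le_mem_dom (hB : B.Finite) (C : Condition B) (p : X) : ∃ D, C ≤ D ∧ p ∈ D.dom := by
  by_cases hp : p ∈ C.dom
  · exact ⟨C, le_rfl, hp⟩
  · obtain ⟨D, hCD, hD, -⟩ := C.exists_le_insert hB hp infinite_univ
    exact ⟨D, hCD, hD ▸ mem_insert p _⟩

lemma exists_le_insert_apply_ne (hB : B.Finite) (C : Condition B) (hp : p ∉ C.dom)
    (f : Perm X) (r : X) : ∃ D, C ≤ D ∧ D.dom = insert p C.dom ∧ f (D.perm p) ≠ r :=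
  C.exists_le_insert hB hp (subsingleton_singleton.preimage f.injective).finite.infinite_compl

lemma exists_le_insert_fresh (hB : B.Finite) (C : Condition B) (hp : p ∉ C.dom) {S : Set X}
    (hS : S.Finite) (g : Perm X) :
    ∃ D, C ≤ D ∧ D.dom = insert p C.dom ∧ D.perm p ∉ S ∧ g (D.perm p) ∉ D.dom := by
  have hT := (hS.union ((C.finite_dom.insert p).preimage g.injective.injOn)).infinite_compl
  obtain ⟨D, hCD, hD, hDp⟩ := C.exists_le_insert hB hp hT
  simp only [mem_compl_iff, mem_union, mem_preimage, not_or] at hDp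
  exact ⟨D, hCD, hD, hDp.1, hD ▸ hDp.2⟩

lemma exists_le_insert_of_infinite (hB : B.Finite) (C : Condition B) {b : Perm X}
    (hb : (fixedBy X b)ᶜ.Infinite) : ∃ q D, C ≤ D ∧ D.dom = insert q C.dom ∧ b q ∉ D.dom := by
  obtain ⟨q, hqb, hq⟩ :=
    (hb.sdiff (C.finite_dom.union (C.finite_dom.preimage b.injective.injOn))).nonempty
  simp only [mem_compl_iff, mem_fixedBy, Perm.smul_def, mem_union, mem_preimage, not_or] at hqb hq
  obtain ⟨D, hCD, hD, -⟩ := C.exists_le_insert hB hq.1 infinite_univ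
  exact ⟨q, D, hCD, hD, by rw [hD, mem_insert_iff, not_or]; exact ⟨hqb, hq.2⟩⟩

/-- `g` is the next coefficient of a longer chain: keeping `g v` uncommitted lets the trace
continue. -/
lemma exists_le_forces_posChain (hB : B.Finite) (l : List (Perm X)) (C : Condition B)
    (hp : p ∉ C.dom) {S : Set X} (hS : S.Finite) (g : Perm X) :
    ∃ D, C ≤ D ∧ ∃ v ∉ S, g v ∉ D.dom ∧ D.Forces (fun x => posChain x l p = v) := by
  induction l generalizing S g with
  | nil =>
    obtain ⟨D, hCD, hD, hvS, hgv⟩ := C.exists_le_insert_fresh hB hp hS g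
    exact ⟨D, hCD, _, hvS, hgv, fun x hx => hx (hD ▸ mem_insert p C.dom)⟩
  | cons b l ih =>
    obtain ⟨D, hCD, u, -, hbu, hDu⟩ := ih finite_empty b
    obtain ⟨E, hDE, hE, hvS, hgv⟩ := D.exists_le_insert_fresh hB hbu hS g
    refine ⟨E, hCD.trans hDE, _, hvS, hgv, fun x hx => ?_⟩
    change x (b (posChain x l p)) = _
    rw [hDu.mono hDE x hx]
    exact hx (hE ▸ mem_insert _ _)

lemma exists_le_forces_pos (hB : B.Finite) (a d : Perm X) (l : List (Perm X))
    (C : Condition B) : ∃ D, C ≤ D ∧ D.Forces (fun x => a * posChain x l * d ≠ 1) := by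
  obtain ⟨p, hp⟩ := C.finite_dom.exists_notMem
  obtain ⟨D, hCD, v, hv, -, hD⟩ := C.exists_le_forces_posChain hB l hp
    (subsingleton_singleton.preimage (d * a).injective).finite 1
  refine ⟨D, hCD, fun x hx h => hv ?_⟩
  rw [← hD x hx]
  exact Perm.mul_mul_apply_eq_of_eq_one h p

lemma exists_le_forces_conj (hB : B.Finite) (a b c : Perm X)
    (hne : ∃ g : Perm X, a * g * b * g⁻¹ * c ≠ 1)
    (hca : (fixedBy X (c * a))ᶜ.Finite → (fixedBy X (c * a))ᶜ ⊆ B) (C : Condition B) :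
    ∃ D, C ≤ D ∧ D.Forces (fun x => a * x * b * x⁻¹ * c ≠ 1) := by
  by_cases hb : b = 1
  · obtain ⟨g, hg⟩ := hne
    exact ⟨C, le_rfl, fun x _ => by simpa [hb] using hg⟩
  by_cases hbfin : (fixedBy X b)ᶜ.Finite
  · by_cases hcafin : (fixedBy X (c * a))ᶜ.Finite
    · -- `x b x⁻¹ = (c a)⁻¹` is then a genuine conjugacy condition: it fails once `x` sends a
      -- point moved by `b` outside `B`, which contains the support of `c a`.
      obtain ⟨p, hp⟩ : ∃ p, b p ≠ p := by
        by_contra! h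
        exact hb (Equiv.ext h)
      obtain ⟨D, hCD, hpD⟩ := C.exists_le_mem_dom hB p
      have hfix : c (a (D.perm p)) = D.perm p := by
        by_contra h
        exact D.mapsTo hpD (hca hcafin h)
      refine ⟨D, hCD, fun x hx h => hp (x.injective (a.injective (c.injective ?_)))⟩
      have hxp : x p = D.perm p := hx hpD
      have := Perm.conj_apply_eq_of_eq_one h (D.perm p)
      rw [Perm.inv_eq_iff_eq.2 hxp.symm] at this
      rw [this, hxp, hfix]
    · obtain ⟨q, hq⟩ := (C.finite_dom.union hbfin).exists_notMem
      simp only [mem_union, not_or, mem_compl_iff, not_not, mem_fixedBy, Perm.smul_def] at hq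
      obtain ⟨D, hCD, hD, hDq⟩ := C.exists_le_insert hB hq.1 hcafin
      refine ⟨D, hCD, fun x hx h => hDq ?_⟩
      have hxq : x q = D.perm q := hx (hD ▸ mem_insert q C.dom)
      have := Perm.conj_apply_eq_of_eq_one h (D.perm q)
      rwa [Perm.inv_eq_iff_eq.2 hxq.symm, hq.2, hxq] at this
  · obtain ⟨q, D, hCD, hD, hbqD⟩ := C.exists_le_insert_of_infinite hB hbfin
    obtain ⟨E, hDE, hE, hEbq⟩ := D.exists_le_insert_apply_ne hB hbqD (c * a) (D.perm q)
    refine ⟨E, hCD.trans hDE, fun x hx h => hEbq ?_⟩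
    have hxq : x q = D.perm q := apply_eq_of_le hx hDE (hD ▸ mem_insert q C.dom)
    have hxbq : x (b q) = E.perm (b q) := hx (hE ▸ mem_insert _ _)
    have := Perm.conj_apply_eq_of_eq_one h (D.perm q)
    rwa [Perm.inv_eq_iff_eq.2 hxq.symm, hxbq] at this

lemma exists_le_forces_posPosNeg (hB : B.Finite) (a b c d : Perm X) (C : Condition B) :
    ∃ D, C ≤ D ∧ D.Forces (fun x => a * x * b * x * c * x⁻¹ * d ≠ 1) := by
  by_cases hcfin : (fixedBy X c)ᶜ.Finite
  · obtain ⟨q, hq⟩ := (C.finite_dom.union hcfin).exists_notMem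
    simp only [mem_union, not_or, mem_compl_iff, not_not, mem_fixedBy, Perm.smul_def] at hq
    obtain ⟨D, hCD, hD, -, hbD⟩ := C.exists_le_insert_fresh hB hq.1 finite_empty b
    obtain ⟨E, hDE, hE, hEt⟩ := D.exists_le_insert_apply_ne hB hbD (d * a) (D.perm q)
    refine ⟨E, hCD.trans hDE, fun x hx h => hEt ?_⟩
    have hxq : x q = D.perm q := apply_eq_of_le hx hDE (hD ▸ mem_insert q C.dom)
    have hxb : x (b (D.perm q)) = E.perm (b (D.perm q)) := hx (hE ▸ mem_insert _ _)
    have := Perm.posPosNeg_apply_eq_of_eq_one h (D.perm q)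
    rwa [Perm.inv_eq_iff_eq.2 hxq.symm, hq.2, hxq, hxb] at this
  · obtain ⟨q, D, hCD, hD, hcqD⟩ := C.exists_le_insert_of_infinite hB hcfin
    obtain ⟨E, hDE, hE, -, hbE⟩ := D.exists_le_insert_fresh hB hcqD finite_empty b
    obtain ⟨F, hEF, hF, hFt⟩ := E.exists_le_insert_apply_ne hB hbE (d * a) (D.perm q)
    refine ⟨F, (hCD.trans hDE).trans hEF, fun x hx h => hFt ?_⟩
    have hxq : x q = D.perm q := apply_eq_of_le hx (hDE.trans hEF) (hD ▸ mem_insert q C.dom)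
    have hxc : x (c q) = E.perm (c q) := apply_eq_of_le hx hEF (hE ▸ mem_insert _ _)
    have hxb : x (b (E.perm (c q))) = F.perm (b (E.perm (c q))) := hx (hF ▸ mem_insert _ _)
    have := Perm.posPosNeg_apply_eq_of_eq_one h (D.perm q)
    rwa [Perm.inv_eq_iff_eq.2 hxq.symm, hxc, hxb] at this

end Condition

namespace NormalPoly

variable {X : Type*}

def obstruction : NormalPoly (Perm X) → Set X
  | conj a _ c => {z | (fixedBy X (c * a))ᶜ.Finite ∧ z ∉ fixedBy X (c * a)}
  | _ => ∅

lemma finite_obstruction (N : NormalPoly (Perm X)) : N.obstruction.Finite := by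
  cases N with
  | conj a b c =>
    by_cases h : (fixedBy X (c * a))ᶜ.Finite
    · exact h.subset fun z hz => hz.2
    · simp [obstruction, h]
  | _ => exact finite_empty

lemma exists_le_forces_eval_ne_one [Infinite X] {B : Set X} (hB : B.Finite)
    (N : NormalPoly (Perm X)) (hN : ∃ g, N.eval g ≠ 1) (hNB : N.obstruction ⊆ B)
    (C : Condition B) : ∃ D, C ≤ D ∧ D.Forces (fun x => N.eval x ≠ 1) := by
  cases N with
  | const a =>
    obtain ⟨g, hg⟩ := hN
    exact ⟨C, le_rfl, fun _ _ => hg⟩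
  | pos a l d => exact C.exists_le_forces_pos hB a d l
  | conj a b c => exact C.exists_le_forces_conj hB a b c hN fun h _ hz => hNB ⟨h, hz⟩
  | posPosNeg a b c d => exact C.exists_le_forces_posPosNeg hB a b c d

end NormalPoly

theorem exists_finitary_forall_gpEval_ne_one {X : Type*} [Infinite X]
    (F : Set (Perm X × List (Bool × Perm X))) (hF : F.Finite) (hlen : ∀ f ∈ F, f.2.length ≤ 3)
    (hne : ∀ f ∈ F, ∃ g, gpEval g f.1 f.2 ≠ 1) :
    ∃ x : Perm X, (fixedBy X x)ᶜ.Finite ∧ ∀ f ∈ F, gpEval x f.1 f.2 ≠ 1 := by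
  choose N hN using fun f (hf : f ∈ F) => NormalPoly.exists_eval_eq_one_iff f.1 f.2 (hlen f hf)
  set B := ⋃ (f) (hf : f ∈ F), (N f hf).obstruction
  have hB : B.Finite := hF.biUnion' fun f hf => (N f hf).finite_obstruction
  let C₀ : Condition B := ⟨1, ∅, by simp, finite_empty, mapsTo_empty _ _⟩
  obtain ⟨D, -, hD⟩ := C₀.exists_le_forall_forces hF.toFinset
    (P := fun f x => gpEval x f.1 f.2 ≠ 1) fun f hf C => by
      rw [hF.mem_toFinset] at hf
      obtain ⟨g, hg⟩ := hne f hf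
      obtain ⟨E, hCE, hE⟩ := (N f hf).exists_le_forces_eval_ne_one hB
        ⟨g, fun h => hg ((hN f hf g).1 h)⟩
        (subset_iUnion₂ (s := fun f hf => (N f hf).obstruction) f hf) C
      exact ⟨E, hCE, fun x hx h => hE x hx ((hN f hf x).2 h)⟩
  exact ⟨D.perm, D.finite_compl_fixedBy,
    fun f hf => hD f (hF.mem_toFinset.2 hf) D.perm (eqOn_refl _ _)⟩

lemma hyperconnected_generateFrom {Y : Type*} {S : Set (Set Y)}
    (h : ∀ F ⊆ S, F.Finite → (∀ W ∈ F, W.Nonempty) → (⋂₀ F).Nonempty) :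
    Hyperconnected (generateFrom S) := by
  let _ := generateFrom S
  have hbasis := isTopologicalBasis_of_subbasis (rfl : generateFrom S = generateFrom S)
  rintro U V hU hV ⟨u, hu⟩ ⟨v, hv⟩
  obtain ⟨-, ⟨F₁, ⟨hF₁, hF₁S⟩, rfl⟩, huF₁, hF₁U⟩ := hbasis.exists_subset_of_mem_open hu hU
  obtain ⟨-, ⟨F₂, ⟨hF₂, hF₂S⟩, rfl⟩, hvF₂, hF₂V⟩ := hbasis.exists_subset_of_mem_open hv hV
  obtain ⟨y, hy⟩ := h (F₁ ∪ F₂) (union_subset hF₁S hF₂S) (hF₁.union hF₂) <| by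
    rintro W (hW | hW)
    exacts [⟨u, huF₁ W hW⟩, ⟨v, hvF₂ W hW⟩]
  exact ⟨y, hF₁U fun W hW => hy W (Or.inl hW), hF₂V fun W hW => hy W (Or.inr hW)⟩

theorem hyperconnected_gpZariskiLe {X : Type*} [Infinite X] (G : Subgroup (Perm X))
    (hG : ∀ g : Perm X, {x : X | g x ≠ x}.Finite → g ∈ G) {n : ℕ} (hn : n ≤ 3) :
    Hyperconnected (gpZariskiLe G n) := by
  refine hyperconnected_generateFrom fun F hFS hF hne => ?_
  choose a l hl hW using hFS
  let poly (W : F) : Perm X × List (Bool × Perm X) :=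
    (a W.2, (l W.2).map (Prod.map id G.subtype))
  have : Finite F := hF.to_subtype
  obtain ⟨x, hxfin, hx⟩ := exists_finitary_forall_gpEval_ne_one (range poly) (finite_range poly)
    (by rintro _ ⟨W, rfl⟩; simpa [poly] using (hl W.2).trans hn)
    (by
      rintro _ ⟨W, rfl⟩
      obtain ⟨y, hy⟩ := hne W W.2
      rw [hW W.2] at hy
      exact ⟨y, (gpEval_eq_one_iff_of_injective G.subtype_injective y _ _).not.2 hy⟩)
  refine ⟨⟨x, hG x hxfin⟩, fun W hWF => ?_⟩
  rw [hW hWF]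
  exact (gpEval_eq_one_iff_of_injective G.subtype_injective ⟨x, _⟩ _ _).not.1
    (hx _ ⟨⟨W, hWF⟩, rfl⟩)

lemma isTopologicalGroup_perm {X : Type*} [TopologicalSpace X] [DiscreteTopology X] :
    @IsTopologicalGroup (Perm X) (induced (fun (g : Perm X) (x : X) => g x) inferInstance) _ := by
  let _ : TopologicalSpace (Perm X) := induced (fun (g : Perm X) (x : X) => g x) inferInstance
  have hcont : ∀ {Y : Type _} [TopologicalSpace Y] {f : Y → Perm X},
      Continuous f ↔ ∀ z, Continuous fun y => f y z :=
    continuous_induced_rng.trans continuous_pi_iff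
  have happly (z : X) : Continuous fun g : Perm X => g z := hcont.1 continuous_id z
  refine { continuous_mul := hcont.2 fun z => ?_, continuous_inv := hcont.2 fun z => ?_ }
  · refine continuous_discrete_rng.2 fun y => ?_
    have : (fun g : Perm X × Perm X => (g.1 * g.2) z) ⁻¹' {y} =
        ⋃ w, (fun g => g.2 z) ⁻¹' {w} ∩ (fun g => g.1 w) ⁻¹' {y} := by
      ext g
      simp
    rw [this]
    exact isOpen_iUnion fun w =>
      ((isOpen_discrete _).preimage ((happly z).comp continuous_snd)).inter
        ((isOpen_discrete _).preimage ((happly w).comp continuous_fst))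
  · refine continuous_discrete_rng.2 fun y => ?_
    have : (fun g : Perm X => g⁻¹ z) ⁻¹' {y} = (fun g => g y) ⁻¹' {z} := by
      ext g
      rw [mem_preimage, mem_singleton_iff, Perm.inv_eq_iff_eq, eq_comm]
      rfl
    rw [this]
    exact (isOpen_discrete _).preimage (happly y)

section Swaps

variable {X : Type*} [DecidableEq X]

lemma eq_or_eq_of_swap_mul_swap_sq_ne_one {a b c d : X} (h : (swap a b * swap c d) ^ 2 ≠ 1) :
    a = c ∨ a = d ∨ b = c ∨ b = d := by
  by_contra! hne
  obtain ⟨hac, had, hbc, hbd⟩ := hne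
  have hdisj : (swap a b).Disjoint (swap c d) := fun z => by
    by_cases hz : z = a ∨ z = b
    · right
      rcases hz with rfl | rfl
      exacts [swap_apply_of_ne_of_ne hac had, swap_apply_of_ne_of_ne hbc hbd]
    · left
      push Not at hz
      exact swap_apply_of_ne_of_ne hz.1 hz.2
  exact h (by rw [hdisj.commute.mul_pow, sq, sq, swap_mul_self, swap_mul_self, one_mul])

lemma swap_mul_swap_sq_ne_one {q v w : X} (hvq : v ≠ q) (hwq : w ≠ q) (hvw : v ≠ w) :
    (swap q v * swap q w) ^ 2 ≠ 1 := fun h => by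
  have := DFunLike.congr_fun h w
  simp [sq, swap_apply_of_ne_of_ne hvq hvw] at this
  exact hwq this.symm

/-- `(swap (x p) (x z) * swap q y) ^ 2 ≠ 1` says that the two transpositions share exactly one
point. If `x p ≠ q`, imposing this for three values of `y` forces `x z = q`, which cannot hold
for two values of `z`. -/
lemma apply_eq_of_forall_swap_mul_swap_sq_ne_one {x : Perm X} {p q : X} {Z Y : Finset X}
    (hZ : Z.card = 2) (hY : Y.card = 3)
    (h : ∀ z ∈ Z, ∀ y ∈ Y, (swap (x p) (x z) * swap q y) ^ 2 ≠ 1) : x p = q := by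
  by_contra hxp
  have hZq (z) (hz : z ∈ Z) : x z = q := by
    by_contra hxz
    have : Y ⊆ {x p, x z} := fun y hy => by
      have := eq_or_eq_of_swap_mul_swap_sq_ne_one (h z hz y hy)
      simp only [Finset.mem_insert, Finset.mem_singleton]
      tauto
    simpa [hY] using (Finset.card_le_card this).trans Finset.card_le_two
  have : Z ⊆ {x⁻¹ q} := fun z hz => by
    rw [Finset.mem_singleton, Perm.eq_inv_iff_eq]
    exact hZq z hz
  simpa [hZ] using Finset.card_le_card this

end Swaps

theorem isOpen_setOf_apply_eq {X : Type*} [Infinite X] (G : Subgroup (Perm X))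
    (hG : ∀ g : Perm X, {x : X | g x ≠ x}.Finite → g ∈ G) {n : ℕ} (hn : 4 ≤ n) (p q : X) :
    IsOpen[gpZariskiLe G n] {g : G | (g : Perm X) p = q} := by
  classical
  have hswap (a b : X) : swap a b ∈ G := hG _ finite_compl_fixedBy_swap
  let _ := gpZariskiLe G n
  let V (z y : X) : Set G :=
    {g | gpEval g 1 [(true, ⟨swap p z, hswap p z⟩), (false, ⟨swap q y, hswap q y⟩),
      (true, ⟨swap p z, hswap p z⟩), (false, ⟨swap q y, hswap q y⟩)] ≠ 1}
  have hV (g : G) (z y : X) :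
      g ∈ V z y ↔ (swap ((g : Perm X) p) ((g : Perm X) z) * swap q y) ^ 2 ≠ 1 := by
    rw [mem_ofPred_eq, Ne, ← gpEval_eq_one_iff_of_injective G.subtype_injective]
    simp only [List.map_cons, List.map_nil, Prod.map_apply, id_eq, Subgroup.subtype_apply,
      map_one, gpEval_conj_sq, swap_apply_apply]
  have hVopen (z y : X) : IsOpen (V z y) := isOpen_generateFrom_of_mem ⟨1, _, by simpa, rfl⟩
  rw [isOpen_iff_forall_mem_open]
  intro g₀ hg₀
  obtain ⟨Z, hZ, hZcard⟩ := (finite_singleton p).infinite_compl.exists_subset_card_eq 2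
  obtain ⟨Y, hY, hYcard⟩ := ((finite_singleton q).union
    (Z.finite_toSet.image (g₀ : Perm X))).infinite_compl.exists_subset_card_eq 3
  refine ⟨⋂ z ∈ Z, ⋂ y ∈ Y, V z y, fun x hx => ?_,
    isOpen_biInter_finset fun z _ => isOpen_biInter_finset fun y _ => hVopen z y, ?_⟩
  · simp only [mem_iInter, hV] at hx
    exact apply_eq_of_forall_swap_mul_swap_sq_ne_one hZcard hYcard hx
  · simp only [mem_iInter, hV, show (g₀ : Perm X) p = q from hg₀]
    intro z hz y hy
    have hzp : z ≠ p := by simpa using hZ hz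
    have hy := hY hy
    simp only [Finset.mem_coe, mem_compl_iff, mem_union, mem_singleton_iff, mem_image, not_or,
      not_exists, not_and] at hy
    refine swap_mul_swap_sq_ne_one ?_ hy.1 (hy.2 z hz)
    rw [← hg₀]
    exact (g₀ : Perm X).injective.ne hzp

section PointwiseConvergence

variable {X : Type*} (G : Subgroup (Perm X))

lemma subPtwise_eq_induced :
    subPtwise G = induced (fun (g : G) (x : X) => (g : Perm X) x)
      (Pi.topologicalSpace (t₂ := fun _ => ⊥)) :=
  induced_compose

lemma coeFn_injective_subgroup : Function.Injective fun (g : G) (x : X) => (g : Perm X) x :=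
  fun _ _ h => Subtype.ext (DFunLike.coe_injective h)

lemma totallyDisconnectedSpace_subPtwise : @TotallyDisconnectedSpace G (subPtwise G) := by
  let _ : TopologicalSpace X := ⊥
  have : DiscreteTopology X := ⟨rfl⟩
  let _ := subPtwise G
  rw [totallyDisconnectedSpace_iff]
  exact isTotallyDisconnected_of_image
    (continuous_iff_le_induced.2 (subPtwise_eq_induced G).le).continuousOn
    (coeFn_injective_subgroup G) (isTotallyDisconnected_of_totallyDisconnectedSpace _)

lemma subPtwise_le_gpZariskiLe (n : ℕ) : subPtwise G ≤ gpZariskiLe G n := by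
  let _ : TopologicalSpace X := ⊥
  have : DiscreteTopology X := ⟨rfl⟩
  let _ : TopologicalSpace (Perm X) := permPtwise X
  let _ : TopologicalSpace G := subPtwise G
  have : IsTopologicalGroup (Perm X) := isTopologicalGroup_perm
  have : IsTopologicalGroup G := Topology.IsInducing.topologicalGroup G.subtype ⟨rfl⟩
  have : T2Space G := T2Space.of_injective_continuous (coeFn_injective_subgroup G)
    (continuous_iff_le_induced.2 (subPtwise_eq_induced G).le)
  exact le_gpZariskiLe n

lemma gpZariskiLe_le_subPtwise [Infinite X]
    (hG : ∀ g : Perm X, {x : X | g x ≠ x}.Finite → g ∈ G) {n : ℕ} (hn : 4 ≤ n) :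
    gpZariskiLe G n ≤ subPtwise G := by
  let _ : TopologicalSpace X := ⊥
  have : DiscreteTopology X := ⟨rfl⟩
  let _ := gpZariskiLe G n
  rw [subPtwise_eq_induced, ← continuous_iff_le_induced]
  exact continuous_pi fun z => continuous_discrete_rng.2 fun y => isOpen_setOf_apply_eq G hG hn z y

end PointwiseConvergence

/-- Dichotomy for `Sym_ω(X) ⊆ G ⊆ Sym(X)` with `X` infinite: for `n ≥ 4`, `Z±_n(G)` is the
topology of pointwise convergence and in particular totally disconnected; for `n ≤ 3`,
`Z±_n(G)` is hyperconnected. -/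
theorem statement6 {X : Type*} [Infinite X] (G : Subgroup (Equiv.Perm X))
    (hG : ∀ g : Equiv.Perm X, {x : X | g x ≠ x}.Finite → g ∈ G) (n : ℕ) :
    (4 ≤ n → gpZariskiLe ↥G n = subPtwise G ∧
      @TotallyDisconnectedSpace ↥G (gpZariskiLe ↥G n)) ∧
    (n ≤ 3 → Hyperconnected (gpZariskiLe ↥G n)) := by
  refine ⟨fun hn => ?_, hyperconnected_gpZariskiLe G hG⟩
  rw [le_antisymm (gpZariskiLe_le_subPtwise G hG hn) (subPtwise_le_gpZariskiLe G n)]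
  exact ⟨rfl, totallyDisconnectedSpace_subPtwise G⟩
end

section
/- Let X be a set and let G be an infinite subgroup of Sym(X) with no algebraicity. Then the semigroup Zariski topology Z(G) is not Hausdorff, and the multiplication map G × G → G is not continuous when G carries Z(G) and G × G carries the product topology. -/
open Topology TopologicalSpace

/-- A subgroup `G ≤ Sym(X)` has no algebraicity if for every finite `S ⊆ X` and every
`q ∈ X \ S`, the set `{g q | g ∈ G, g fixes S pointwise}` is infinite. -/
def NoAlgebraicity {X : Type*} (G : Subgroup (Equiv.Perm X)) : Prop :=
  ∀ S : Finset X, ∀ q : X, q ∉ S →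
    {a : X | ∃ g ∈ G, (∀ x ∈ S, g x = x) ∧ g q = a}.Infinite

/-!
Say that the values of a permutation `z` on a finite set `D` are *generic* (for a finite set `C`
of coefficients and a finite set `Q` of base points) if no two coefficients carry two distinct
values, or a value and a base point, to the same point. No algebraicity lets us change `z ∈ G`
at a new point to a value outside any prescribed finite set, keeping it fixed on `D`, so generic
assignments can always be extended. Cancel common right factors of an inequation
`a x ⋯ x c ≠ b x ⋯ x c'` and pick `q` with `c q ≠ c' q`. At `q`, the two sides act through walks
that pass through generic values only. Those walks cannot merge, so the inequation holds.
Extending one `z ∈ G` along the walks of finitely many satisfiable inequations shows that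
finitely many nonempty subbasic open sets of `Z(G)` always meet. So `Z(G)` is preirreducible and
not Hausdorff. Inversion is continuous for `Z(G)`, and `{1}` is closed in it. Continuous
multiplication would therefore make `G` a T₁ topological group, which is Hausdorff.
-/

open Equiv Set

section Monoid

variable {M N : Type*} [Monoid M] [Monoid N]

lemma map_sgEval (f : M →* N) (x a : M) (l : List M) :
    f (sgEval x a l) = sgEval (f x) (f a) (l.map f) := by
  simp [sgEval, map_list_prod, Function.comp_def]

lemma sgEval_append (x a : M) (l s : List M) :
    sgEval x a (l ++ s) = sgEval x a l * sgEval x 1 s := by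
  simp [sgEval, mul_assoc]

end Monoid

lemma Subgroup.coe_sgEval {M : Type*} [Group M] (G : Subgroup M) (x a : G) (l : List G) :
    ((sgEval x a l : G) : M) = sgEval (x : M) a (l.map (↑)) :=
  map_sgEval G.subtype x a l

section Group

variable (M : Type*) [Group M]

lemma exists_sgEval_inv_inv_eq (a : M) (l : List M) :
    ∃ a' l', ∀ x : M, (sgEval x⁻¹ a l)⁻¹ = sgEval x a' l' := by
  induction l using List.reverseRecOn with
  | nil => exact ⟨a⁻¹, [], fun x => by simp [sgEval]⟩
  | append_singleton l b ih =>
    obtain ⟨a', l', h⟩ := ih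
    refine ⟨b⁻¹, a' :: l', fun x => ?_⟩
    rw [sgEval_append, mul_inv_rev, h]
    simp [sgEval, mul_assoc]

lemma continuous_inv_sgZariski : @Continuous M M (sgZariski M) (sgZariski M) Inv.inv := by
  let := sgZariski M
  refine continuous_generateFrom_iff.2 ?_
  rintro _ ⟨a, l, b, m, rfl⟩
  obtain ⟨a', l', ha⟩ := exists_sgEval_inv_inv_eq M a l
  obtain ⟨b', m', hb⟩ := exists_sgEval_inv_inv_eq M b m
  have : Inv.inv ⁻¹' {x | sgEval x a l ≠ sgEval x b m} = {x | sgEval x a' l' ≠ sgEval x b' m'} := by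
    ext x
    simp only [mem_preimage, mem_ofPred_eq, ← ha, ← hb, ne_eq, inv_inj]
  rw [this]
  exact isOpen_generateFrom_of_mem ⟨a', l', b', m', rfl⟩

lemma isClosed_one_sgZariski : @IsClosed M (sgZariski M) {1} := by
  let := sgZariski M
  refine isOpen_compl_iff.1 (isOpen_generateFrom_of_mem ⟨1, [1], 1, [], ?_⟩)
  ext x
  simp [sgEval]

end Group

lemma preirreducibleSpace_generateFrom {α : Type*} {B : Set (Set α)}
    (hB : ∀ s ⊆ B, s.Finite → (∀ u ∈ s, u.Nonempty) → (⋂₀ s).Nonempty) :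
    @PreirreducibleSpace α (generateFrom B) := by
  let := generateFrom B
  have hbasis := isTopologicalBasis_of_subbasis (t := generateFrom B) rfl
  refine ⟨fun u v hu hv ⟨x, _, hxu⟩ ⟨y, _, hyv⟩ => ?_⟩
  obtain ⟨_, ⟨s, ⟨hs, hsB⟩, rfl⟩, hxs, hsu⟩ := hbasis.exists_subset_of_mem_open hxu hu
  obtain ⟨_, ⟨t, ⟨ht, htB⟩, rfl⟩, hyt, htv⟩ := hbasis.exists_subset_of_mem_open hyv hv
  obtain ⟨z, hzs, hzt⟩ : (⋂₀ s ∩ ⋂₀ t).Nonempty := by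
    rw [← sInter_union]
    refine hB _ (union_subset hsB htB) (hs.union ht) ?_
    rintro w (hw | hw)
    exacts [⟨x, hxs w hw⟩, ⟨y, hyt w hw⟩]
  exact ⟨z, trivial, hsu hzs, htv hzt⟩

section Perm

variable {X : Type*}

def sgWalk (z : Perm X) : List (Perm X) → X → X
  | [], q => q
  | c :: l, q => z (c (sgWalk z l q))

lemma sgEval_apply (z a : Perm X) (l : List (Perm X)) (q : X) :
    sgEval z a l q = a (sgWalk z l q) := by
  induction l generalizing a with
  | nil => simp [sgEval, sgWalk]
  | cons c l ih =>
    have h1 := ih 1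
    simp only [sgEval, List.map_cons, List.prod_cons, Perm.mul_apply, Perm.one_apply] at h1 ⊢
    rw [h1]
    rfl

def SgWalkIn (z : Perm X) (D : Finset X) : List (Perm X) → X → Prop
  | [], _ => True
  | c :: l, q => c (sgWalk z l q) ∈ D ∧ SgWalkIn z D l q

variable {z z' : Perm X} {D D' : Finset X} {l m : List (Perm X)} {q q' : X}

lemma SgWalkIn.sgWalk_eq (h : SgWalkIn z D l q) (hz : EqOn z' z D) :
    sgWalk z' l q = sgWalk z l q := by
  induction l with
  | nil => rfl
  | cons c l ih =>
    change z' (c (sgWalk z' l q)) = z (c (sgWalk z l q))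
    rw [ih h.2, hz h.1]

lemma SgWalkIn.mono (h : SgWalkIn z D l q) (hD : D ⊆ D') (hz : EqOn z' z D) :
    SgWalkIn z' D' l q := by
  induction l with
  | nil => trivial
  | cons c l ih => exact ⟨by rw [h.2.sgWalk_eq hz]; exact hD h.1, ih h.2⟩

lemma SgWalkIn.exists_sgWalk_eq (h : SgWalkIn z D l q) (hl : l ≠ []) :
    ∃ v ∈ D, sgWalk z l q = z v := by
  cases l with
  | nil => exact absurd rfl hl
  | cons c l => exact ⟨_, h.1, rfl⟩

structure IsGenericOn (C : Set (Perm X)) (Q : Set X) (z : Perm X) (D : Finset X) : Prop where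
  eq_of_apply_eq : ∀ v ∈ D, ∀ v' ∈ D, ∀ c ∈ C, ∀ c' ∈ C, c (z v) = c' (z v') → v = v'
  apply_ne_root : ∀ v ∈ D, ∀ c ∈ C, ∀ c' ∈ C, ∀ q ∈ Q, c (z v) ≠ c' q

variable {C : Set (Perm X)} {Q : Set X}

lemma isGenericOn_empty : IsGenericOn C Q z ∅ := ⟨by simp, by simp⟩

lemma IsGenericOn.insert [DecidableEq X] (h : IsGenericOn C Q z D) (hz : EqOn z' z D) {u : X}
    (hfresh : ∀ c ∈ C, ∀ c' ∈ C, ∀ w ∈ z '' D ∪ Q, c (z' u) ≠ c' w) :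
    IsGenericOn C Q z' (insert u D) := by
  constructor
  · intro v hv v' hv' c hc c' hc' he
    rw [Finset.mem_insert] at hv hv'
    rcases hv with rfl | hv <;> rcases hv' with rfl | hv'
    · rfl
    · rw [hz hv'] at he
      exact absurd he (hfresh c hc c' hc' _ (Or.inl ⟨v', hv', rfl⟩))
    · rw [hz hv] at he
      exact absurd he.symm (hfresh c' hc' c hc _ (Or.inl ⟨v, hv, rfl⟩))
    · rw [hz hv, hz hv'] at he
      exact h.eq_of_apply_eq v hv v' hv' c hc c' hc' he
  · intro v hv c hc c' hc' q hq
    rcases Finset.mem_insert.1 hv with rfl | hv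
    · exact hfresh c hc c' hc' q (Or.inr hq)
    · rw [hz hv]
      exact h.apply_ne_root v hv c hc c' hc' q hq

lemma IsGenericOn.apply_sgWalk_ne (h : IsGenericOn C Q z D) (hw : SgWalkIn z D l q)
    (hl : l ≠ []) {a b : Perm X} (ha : a ∈ C) (hb : b ∈ C) (hq' : q' ∈ Q) :
    a (sgWalk z l q) ≠ b q' := by
  obtain ⟨v, hv, he⟩ := hw.exists_sgWalk_eq hl
  rw [he]
  exact h.apply_ne_root v hv a ha b hb q' hq'

lemma IsGenericOn.apply_eq_of_sgWalk_eq (h : IsGenericOn C Q z D) {c c' : Perm X}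
    (hq : q ∈ Q) (hq' : q' ∈ Q) (hl : ∀ d ∈ l ++ [c], d ∈ C) (hm : ∀ d ∈ m ++ [c'], d ∈ C)
    (hwl : SgWalkIn z D (l ++ [c]) q) (hwm : SgWalkIn z D (m ++ [c']) q')
    (he : sgWalk z (l ++ [c]) q = sgWalk z (m ++ [c']) q') : c q = c' q' := by
  induction l generalizing m with
  | nil =>
    cases m with
    | nil => exact z.injective he
    | cons e m =>
      exact absurd (z.injective he).symm
        (h.apply_sgWalk_ne hwm.2 (by simp) (hm e (by simp)) (hl c (by simp)) hq)
  | cons d l ih =>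
    cases m with
    | nil =>
      exact absurd (z.injective he)
        (h.apply_sgWalk_ne hwl.2 (by simp) (hl d (by simp)) (hm c' (by simp)) hq')
    | cons e m =>
      have hwl' : SgWalkIn z D (l ++ [c]) q := hwl.2
      have hwm' : SgWalkIn z D (m ++ [c']) q' := hwm.2
      obtain ⟨v, hv, hve⟩ := hwl'.exists_sgWalk_eq (by simp)
      obtain ⟨v', hv', hve'⟩ := hwm'.exists_sgWalk_eq (by simp)
      have hde : d (z v) = e (z v') := by rw [← hve, ← hve']; exact z.injective he
      have hvv := h.eq_of_apply_eq v hv v' hv' d (hl d (by simp)) e (hm e (by simp)) hde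
      exact ih (fun x hx => hl x (List.mem_cons_of_mem d hx))
        (fun x hx => hm x (List.mem_cons_of_mem e hx)) hwl' hwm' (by rw [hve, hve', hvv])

/-- Normal form of the inequation `sgEval x a l ≠ sgEval x b m` once common right factors are
cancelled; `q` is a point at which the first steps of the two walks differ. -/
inductive IsReducedAt (q : X) : Perm X → List (Perm X) → Perm X → List (Perm X) → Prop
  | const {a b} : a q ≠ b q → IsReducedAt q a [] b []
  | left {a b l} : l ≠ [] → IsReducedAt q a l b []
  | right {a b m} : m ≠ [] → IsReducedAt q a [] b m
  | last {a b l m c c'} : c q ≠ c' q → IsReducedAt q a (l ++ [c]) b (m ++ [c'])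

lemma exists_isReducedAt {w a b : Perm X} (hw : sgEval w a l ≠ sgEval w b m) :
    ∃ l₁ m₁ s q, l = l₁ ++ s ∧ m = m₁ ++ s ∧ IsReducedAt q a l₁ b m₁ := by
  obtain ⟨q₀, -⟩ := DFunLike.ne_iff.1 hw
  induction l using List.reverseRecOn generalizing m with
  | nil =>
    rcases m.eq_nil_or_concat' with rfl | ⟨m, c', rfl⟩
    · obtain ⟨q, hq⟩ := DFunLike.ne_iff.1 (by simpa [sgEval] using hw : a ≠ b)
      exact ⟨[], [], [], q, rfl, rfl, .const hq⟩
    · exact ⟨[], m ++ [c'], [], q₀, rfl, by simp, .right (by simp)⟩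
  | append_singleton l c ih =>
    rcases m.eq_nil_or_concat' with rfl | ⟨m, c', rfl⟩
    · exact ⟨l ++ [c], [], [], q₀, by simp, rfl, .left (by simp)⟩
    by_cases hcc : c = c'
    · subst hcc
      rw [sgEval_append, sgEval_append, Ne, mul_left_inj] at hw
      obtain ⟨l₁, m₁, s, q, rfl, rfl, hred⟩ := ih hw
      exact ⟨l₁, m₁, s ++ [c], q, by simp, by simp, hred⟩
    · obtain ⟨q, hq⟩ := DFunLike.ne_iff.1 hcc
      exact ⟨l ++ [c], m ++ [c'], [], q, by simp, by simp, .last hq⟩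

lemma IsGenericOn.sgEval_ne (h : IsGenericOn C Q z D) {a b : Perm X}
    (hred : IsReducedAt q a l b m) (ha : a ∈ C) (hb : b ∈ C) (hl : ∀ d ∈ l, d ∈ C)
    (hm : ∀ d ∈ m, d ∈ C) (hq : q ∈ Q) (hwl : SgWalkIn z D l q) (hwm : SgWalkIn z D m q) :
    sgEval z a l ≠ sgEval z b m := by
  refine fun he => ?_
  replace he := DFunLike.congr_fun he q
  rw [sgEval_apply, sgEval_apply] at he
  cases hred with
  | const hab => exact hab he
  | left hl' => exact h.apply_sgWalk_ne hwl hl' ha hb hq he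
  | right hm' => exact h.apply_sgWalk_ne hwm hm' hb ha hq he.symm
  | last hcc =>
    obtain ⟨v, hv, hve⟩ := hwl.exists_sgWalk_eq (by simp)
    obtain ⟨v', hv', hve'⟩ := hwm.exists_sgWalk_eq (by simp)
    rw [hve, hve'] at he
    have hvv := h.eq_of_apply_eq v hv v' hv' a ha b hb he
    exact hcc (h.apply_eq_of_sgWalk_eq hq hq hl hm hwl hwm (by rw [hve, hve', hvv]))

namespace NoAlgebraicity

variable {G : Subgroup (Perm X)} (hG : NoAlgebraicity G)
include hG

lemma exists_eqOn_forall_apply_ne (hC : C.Finite) {W : Set X} (hW : W.Finite) (hz : z ∈ G)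
    {u : X} (hu : u ∉ D) :
    ∃ z' ∈ G, EqOn z' z D ∧ ∀ c ∈ C, ∀ c' ∈ C, ∀ w ∈ W, c (z' u) ≠ c' w := by
  classical
  have hzu : z u ∉ D.image z := by simpa using hu
  have hF := (hC.prod (hC.prod hW)).image fun p => p.1⁻¹ (p.2.1 p.2.2)
  obtain ⟨_, ⟨y, hy, hfix, rfl⟩, hyF⟩ := (hG _ _ hzu).exists_notMem_finite hF
  refine ⟨y * z, mul_mem hy hz, fun v hv => hfix _ (Finset.mem_image_of_mem z hv),
    fun c hc c' hc' w hw he => hyF ⟨(c, c', w), ⟨hc, hc', hw⟩, ?_⟩⟩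
  simp [← he]

lemma exists_isGenericOn_insert [DecidableEq X] (hC : C.Finite) (hQ : Q.Finite) (hz : z ∈ G)
    (h : IsGenericOn C Q z D) (u : X) :
    ∃ z' ∈ G, EqOn z' z D ∧ IsGenericOn C Q z' (insert u D) := by
  by_cases hu : u ∈ D
  · exact ⟨z, hz, eqOn_refl _ _, by rwa [Finset.insert_eq_of_mem hu]⟩
  obtain ⟨z', hz', heq, hfresh⟩ :=
    hG.exists_eqOn_forall_apply_ne hC ((D.finite_toSet.image z).union hQ) hz hu
  exact ⟨z', hz', heq, h.insert heq hfresh⟩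

lemma exists_sgWalkIn [DecidableEq X] (hC : C.Finite) (hQ : Q.Finite) (hz : z ∈ G)
    (h : IsGenericOn C Q z D) (l : List (Perm X)) (q : X) :
    ∃ z' ∈ G, ∃ D', D ⊆ D' ∧ EqOn z' z D ∧ IsGenericOn C Q z' D' ∧ SgWalkIn z' D' l q := by
  induction l with
  | nil => exact ⟨z, hz, D, subset_rfl, eqOn_refl _ _, h, trivial⟩
  | cons c l ih =>
    obtain ⟨z₁, hz₁, D₁, hD₁, heq₁, h₁, hw₁⟩ := ih
    obtain ⟨z₂, hz₂, heq₂, h₂⟩ := hG.exists_isGenericOn_insert hC hQ hz₁ h₁ (c (sgWalk z₁ l q))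
    refine ⟨z₂, hz₂, _, hD₁.trans (Finset.subset_insert _ _),
      fun v hv => (heq₂ (hD₁ hv)).trans (heq₁ hv), h₂, ?_,
      hw₁.mono (Finset.subset_insert _ _) heq₂⟩
    rw [hw₁.sgWalk_eq heq₂]
    exact Finset.mem_insert_self _ _

lemma exists_forall_sgWalkIn (hC : C.Finite) (hQ : Q.Finite)
    (T : Finset (List (Perm X) × X)) :
    ∃ z ∈ G, ∃ D, IsGenericOn C Q z D ∧ ∀ p ∈ T, SgWalkIn z D p.1 p.2 := by
  classical
  induction T using Finset.induction_on with
  | empty => exact ⟨1, one_mem G, ∅, isGenericOn_empty, by simp⟩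
  | insert p T _ ih =>
    obtain ⟨z, hz, D, h, hT⟩ := ih
    obtain ⟨z', hz', D', hD, heq, h', hp⟩ := hG.exists_sgWalkIn hC hQ hz h p.1 p.2
    refine ⟨z', hz', D', h', ?_⟩
    simp only [Finset.mem_insert, forall_eq_or_imp]
    exact ⟨hp, fun p' hp' => (hT p' hp').mono hD heq⟩

theorem exists_mem_forall_sgEval_ne {ι : Type*} [Finite ι] (a b : ι → Perm X)
    (l m : ι → List (Perm X)) (hsat : ∀ i, ∃ w, sgEval w (a i) (l i) ≠ sgEval w (b i) (m i)) :
    ∃ z ∈ G, ∀ i, sgEval z (a i) (l i) ≠ sgEval z (b i) (m i) := by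
  classical
  cases nonempty_fintype ι
  choose l₁ m₁ s q hl hm hred using fun i => exists_isReducedAt (hsat i).choose_spec
  set C : Set (Perm X) := ⋃ i, insert (a i) (insert (b i) {c | c ∈ l i ++ m i})
  have hC : C.Finite := finite_iUnion fun i => ((List.finite_toSet _).insert _).insert _
  have hlC : ∀ i, ∀ c ∈ l₁ i, c ∈ C := fun i c hc =>
    mem_iUnion.2 ⟨i, Or.inr (Or.inr (by simp [hl i, hc]))⟩
  have hmC : ∀ i, ∀ c ∈ m₁ i, c ∈ C := fun i c hc =>
    mem_iUnion.2 ⟨i, Or.inr (Or.inr (by simp [hm i, hc]))⟩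
  obtain ⟨z, hz, D, hgen, hwalk⟩ := hG.exists_forall_sgWalkIn hC (finite_range q)
    (Finset.univ.image (fun i => (l₁ i, q i)) ∪ Finset.univ.image (fun i => (m₁ i, q i)))
  refine ⟨z, hz, fun i => ?_⟩
  rw [hl i, hm i, sgEval_append, sgEval_append, Ne, mul_left_inj]
  exact hgen.sgEval_ne (hred i) (mem_iUnion.2 ⟨i, Or.inl rfl⟩)
    (mem_iUnion.2 ⟨i, Or.inr (Or.inl rfl)⟩) (hlC i) (hmC i) ⟨i, rfl⟩
    (hwalk _ (Finset.mem_union_left _ (Finset.mem_image_of_mem _ (Finset.mem_univ i))))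
    (hwalk _ (Finset.mem_union_right _ (Finset.mem_image_of_mem _ (Finset.mem_univ i))))

theorem preirreducibleSpace_sgZariski : @PreirreducibleSpace G (sgZariski G) := by
  refine preirreducibleSpace_generateFrom fun s hsB hs hne => ?_
  have := hs.to_subtype
  choose a l b m hab using fun u : s => hsB u.2
  have hcoe : ∀ (x : G) (u : s), x ∈ (u : Set G) ↔
      sgEval (x : Perm X) (a u) ((l u).map (↑)) ≠ sgEval (x : Perm X) (b u) ((m u).map (↑)) :=
    fun x u => by
      rw [hab u, mem_ofPred_eq, ← Subtype.coe_injective.ne_iff, G.coe_sgEval, G.coe_sgEval]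
  obtain ⟨z, hz, hz'⟩ := hG.exists_mem_forall_sgEval_ne (fun u => (a u : Perm X))
    (fun u => b u) (fun u => (l u).map (↑)) (fun u => (m u).map (↑)) fun u =>
      let ⟨x, hx⟩ := hne u u.2
      ⟨x, (hcoe x u).1 hx⟩
  exact ⟨⟨z, hz⟩, fun u hu => (hcoe ⟨z, hz⟩ ⟨u, hu⟩).2 (hz' ⟨u, hu⟩)⟩

end NoAlgebraicity

end Perm

/-- If `G` is an infinite subgroup of `Sym(X)` with no algebraicity, then the semigroup
Zariski topology `Z(G)` is not Hausdorff and multiplication is not continuous with respect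
to it. -/
theorem statement17 {X : Type*} (G : Subgroup (Equiv.Perm X)) [Infinite ↥G]
    (h : NoAlgebraicity G) :
    ¬ @T2Space ↥G (sgZariski ↥G) ∧
    ¬ @Continuous (↥G × ↥G) ↥G
        (@instTopologicalSpaceProd _ _ (sgZariski ↥G) (sgZariski ↥G)) (sgZariski ↥G)
        (fun p => p.1 * p.2) := by
  let := sgZariski G
  have := h.preirreducibleSpace_sgZariski
  have hT2 : ¬ T2Space G := fun _ => not_preirreducible_nontrivial_t2 G
  refine ⟨hT2, fun hmul => hT2 ?_⟩
  have : ContinuousMul G := ⟨hmul⟩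
  have : ContinuousInv G := ⟨continuous_inv_sgZariski G⟩
  have : IsTopologicalGroup G := {}
  exact IsTopologicalGroup.t2Space_iff_one_closed.2 (isClosed_one_sgZariski G)
end

section
/- Let S be a cancellative monoid and let A, B be k-rowed ragged matrices over S such that N_{A,B} is nonempty. Then there exist m ∈ ℕ and m-rowed ragged matrices P, Q over S such that N_{P,Q} = N_{A,B} and for every i < m: the rows P_i and Q_i do not both have degree 0 (i.e., at least one of them has length greater than 1), and the first entries of P_i and Q_i are distinct. Consequently, the nonempty sets N_{P,Q} with P, Q satisfying these two conditions form a basis of the semigroup Zariski topology on S. -/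
open Topology TopologicalSpace

/-- `N_{A,B}`, for two `k`-rowed ragged matrices `A, B` over a monoid `M`. A row is encoded
as a pair `(a, l) : M × List M` standing for the nonempty tuple `a :: l`, of degree
`l.length`, with row evaluation `sgEval x a l = a * (x * l₀) * (x * l₁) * ⋯`. -/
def NAB {M : Type*} [Monoid M] {k : ℕ} (A B : Fin k → M × List M) : Set M :=
  {x | ∀ i : Fin k, sgEval x (A i).1 (A i).2 ≠ sgEval x (B i).1 (B i).2}

/-!
Over a cancellative monoid a row `a₀ x a₁ ⋯ ≠ b₀ x b₁ ⋯` can be normalised without changing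
its solution set: a common first entry is cancelled, together with the following `x` when both
sides have positive degree. If one side becomes constant, `1 ≠ f(x)` is traded for
`s ≠ f(x) s`, with `s ≠ 1` a value of `f`, and `s` is absorbed into the last coefficient of `f`.
Two distinct constants are replaced by `a x ≠ b x`. The sets `N_{A,B}` are closed under finite
intersections (stack the matrices) and contain the subbasic sets, so they form a basis of the
semigroup Zariski topology; by the normalisation, so do the nonempty ones in normal form.
-/

section Monoid

variable {M : Type*} [Monoid M]

def rowNe (p q : M × List M) : Set M :=
  {x | sgEval x p.1 p.2 ≠ sgEval x q.1 q.2}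

def IsReducedRow (p q : M × List M) : Prop :=
  (p.2 ≠ [] ∨ q.2 ≠ []) ∧ p.1 ≠ q.1

lemma rowNe_comm (p q : M × List M) : rowNe p q = rowNe q p := by
  ext x
  exact ne_comm

lemma NAB_eq_iInter_rowNe {k : ℕ} (A B : Fin k → M × List M) :
    NAB A B = ⋂ i, rowNe (A i) (B i) := by
  ext x
  simp [NAB, rowNe]

lemma NAB_append {k k' : ℕ} (A B : Fin k → M × List M) (A' B' : Fin k' → M × List M) :
    NAB (Fin.append A A') (Fin.append B B') = NAB A B ∩ NAB A' B' := by
  ext x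
  simp only [NAB, Set.mem_ofPred_eq, Set.mem_inter_iff, Fin.forall_fin_add, Fin.append_left,
    Fin.append_right]

lemma sgEval_nil (x a : M) : sgEval x a [] = a := by
  simp [sgEval]

lemma sgEval_cons (x a b : M) (l : List M) :
    sgEval x a (b :: l) = a * (x * sgEval x b l) := by
  simp [sgEval, mul_assoc]

lemma sgEval_eq_mul_sgEval_one (x a : M) (l : List M) :
    sgEval x a l = a * sgEval x 1 l := by
  simp [sgEval]

lemma sgEval_append_singleton_mul (x a c s : M) (l : List M) :
    sgEval x a (l ++ [c * s]) = sgEval x a (l ++ [c]) * s := by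
  simp [sgEval, mul_assoc]

end Monoid

section CancelMonoid

variable {S : Type*} [CancelMonoid S]

lemma rowNe_cons_cons (a b c : S) (l m : List S) :
    rowNe (a, b :: l) (a, c :: m) = rowNe (b, l) (c, m) := by
  ext x
  simp [rowNe, sgEval_cons]

lemma rowNe_singleton (a b c : S) : rowNe (a, [c]) (b, [c]) = rowNe (a, []) (b, []) := by
  ext x
  simp [rowNe, sgEval_cons, sgEval_nil]

lemma exists_isReducedRow_of_ne {a b : S} (hab : a ≠ b) (l m : List S) :
    ∃ p q, IsReducedRow p q ∧ rowNe p q = rowNe (a, l) (b, m) := by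
  by_cases hlm : l = [] ∧ m = []
  · obtain ⟨rfl, rfl⟩ := hlm
    exact ⟨(a, [1]), (b, [1]), ⟨Or.inl (List.cons_ne_nil _ _), hab⟩, rowNe_singleton a b 1⟩
  · exact ⟨(a, l), (b, m), ⟨not_and_or.mp hlm, hab⟩, rfl⟩

lemma exists_isReducedRow_of_nil {a : S} {m : List S} (hm : m ≠ [])
    (h : (rowNe (a, []) (a, m)).Nonempty) :
    ∃ p q, IsReducedRow p q ∧ rowNe p q = rowNe (a, []) (a, m) := by
  obtain ⟨l, c, rfl⟩ := (List.eq_nil_or_concat' m).resolve_left hm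
  obtain ⟨x₀, hx₀⟩ := h
  set s := sgEval x₀ 1 (l ++ [c])
  have hs : s ≠ 1 := by
    simpa [rowNe, sgEval_nil, sgEval_eq_mul_sgEval_one x₀ a, left_ne_mul] using hx₀
  refine ⟨(s, []), (1, l ++ [c * s]), ⟨Or.inr (by simp), hs⟩, ?_⟩
  ext x
  simp only [rowNe, Set.mem_ofPred_eq, sgEval_nil, sgEval_append_singleton_mul,
    sgEval_eq_mul_sgEval_one x a, right_ne_mul, left_ne_mul]

lemma exists_isReducedRow (p q : S × List S) (h : (rowNe p q).Nonempty) :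
    ∃ p' q', IsReducedRow p' q' ∧ rowNe p' q' = rowNe p q := by
  obtain ⟨a, l⟩ := p
  obtain ⟨b, m⟩ := q
  induction l generalizing a b m with
  | nil =>
    rcases eq_or_ne a b with rfl | hab
    · cases m with
      | nil => simp [rowNe] at h
      | cons c m => exact exists_isReducedRow_of_nil (List.cons_ne_nil c m) h
    · exact exists_isReducedRow_of_ne hab [] m
  | cons c l ih =>
    rcases eq_or_ne a b with rfl | hab
    · cases m with
      | nil =>
        rw [rowNe_comm] at h ⊢
        exact exists_isReducedRow_of_nil (List.cons_ne_nil c l) h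
      | cons d m =>
        rw [rowNe_cons_cons a] at h ⊢
        exact ih c d m h
    · exact exists_isReducedRow_of_ne hab (c :: l) m

lemma exists_isReducedRow_NAB_eq {k : ℕ} (A B : Fin k → S × List S) (h : (NAB A B).Nonempty) :
    ∃ P Q : Fin k → S × List S, (∀ i, IsReducedRow (P i) (Q i)) ∧ NAB P Q = NAB A B := by
  rw [NAB_eq_iInter_rowNe] at h ⊢
  choose P Q hPQ using fun i => exists_isReducedRow (A i) (B i) (h.mono (Set.iInter_subset _ i))
  refine ⟨P, Q, fun i => (hPQ i).1, ?_⟩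
  simp only [NAB_eq_iInter_rowNe, (hPQ _).2]

end CancelMonoid

section Topology

variable (M : Type*) [Monoid M]

def nabSets : Set (Set M) :=
  {U | ∃ (k : ℕ) (A B : Fin k → M × List M), U = NAB A B}

lemma finiteInter_nabSets : FiniteInter (nabSets M) where
  univ_mem := ⟨0, Fin.elim0, Fin.elim0, by ext x; simp [NAB]⟩
  inter_mem := by
    rintro _ ⟨k, A, B, rfl⟩ _ ⟨k', A', B', rfl⟩
    exact ⟨k + k', Fin.append A A', Fin.append B B', (NAB_append A B A' B').symm⟩

lemma sgZariski_eq_generateFrom_nabSets : sgZariski M = generateFrom (nabSets M) := by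
  refine le_antisymm (le_generateFrom ?_) (generateFrom_anti ?_)
  · rintro _ ⟨k, A, B, rfl⟩
    let := sgZariski M
    rw [NAB_eq_iInter_rowNe]
    exact isOpen_iInter_of_finite fun i => isOpen_generateFrom_of_mem ⟨_, _, _, _, rfl⟩
  · rintro _ ⟨a, l, b, m, rfl⟩
    exact ⟨1, fun _ => (a, l), fun _ => (b, m), by ext x; simp [NAB]⟩

lemma isTopologicalBasis_nabSets : @IsTopologicalBasis M (sgZariski M) (nabSets M) :=
  @isTopologicalBasis_of_subbasis_of_finiteInter M (sgZariski M) _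
    (sgZariski_eq_generateFrom_nabSets M) (finiteInter_nabSets M)

end Topology

/-- For a cancellative monoid `S` and ragged matrices `A, B` with `N_{A,B}` nonempty, there
are ragged matrices `P, Q` with `N_{P,Q} = N_{A,B}` such that in every row at least one of
`P, Q` has positive degree and the first entries of `P` and `Q` differ. Consequently, the
nonempty sets `N_{P,Q}` with `P, Q` of this form are a basis of the semigroup Zariski
topology on `S`. -/
theorem statement18 {S : Type*} [CancelMonoid S] {k : ℕ} (A B : Fin k → S × List S)
    (h : (NAB A B).Nonempty) :
    (∃ (m : ℕ) (P Q : Fin m → S × List S),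
      NAB P Q = NAB A B ∧
      ∀ i : Fin m, ((P i).2 ≠ [] ∨ (Q i).2 ≠ []) ∧ (P i).1 ≠ (Q i).1) ∧
    @TopologicalSpace.IsTopologicalBasis S (sgZariski S)
      {U | ∃ (m : ℕ) (P Q : Fin m → S × List S),
        (∀ i : Fin m, ((P i).2 ≠ [] ∨ (Q i).2 ≠ []) ∧ (P i).1 ≠ (Q i).1) ∧
        U = NAB P Q ∧ U.Nonempty} := by
  let := sgZariski S
  have hbasis := isTopologicalBasis_nabSets S
  refine ⟨?_, hbasis.sdiff_empty.of_isOpen_of_subset ?_ ?_⟩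
  · obtain ⟨P, Q, hred, hPQ⟩ := exists_isReducedRow_NAB_eq A B h
    exact ⟨k, P, Q, hPQ, hred⟩
  · rintro _ ⟨m, P, Q, -, rfl, -⟩
    exact hbasis.isOpen ⟨m, P, Q, rfl⟩
  · rintro _ ⟨⟨m, A', B', rfl⟩, hU⟩
    have hne : (NAB A' B').Nonempty := Set.nonempty_iff_ne_empty.mpr hU
    obtain ⟨P, Q, hred, hPQ⟩ := exists_isReducedRow_NAB_eq A' B' hne
    exact ⟨m, P, Q, hred, hPQ.symm, hne⟩
end
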